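/- arXiv:math/0510128 — 2 statements merged into one kernel-verified Lean document; each statement's English description precedes it below -/
import Mathlib

section
/- Let C ⊆ ℚ^n be a full-dimensional polyhedral cone and π : ℚ^n → ℚ^d the projection onto the last d coordinates. Then the fiber fan N(C, π(C)) — the common refinement of the inner normal fans of the fibers C_v for v ∈ π(C) — equals the common refinement of the cones π^∨(F), where F ranges over the faces of C^∨ and π^∨ is projection onto the first n-d coordinates of (ℚ^n)*. -/
open Finset Set Pointwise

noncomputable section

variable {ι : Type*}

/-- The standard pairing between `ι → ℚ` and itself (functionals as vectors). -/
def dotp [Fintype ι] (w x : ι → ℚ) : ℚ := ∑ i, w i * x i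

/-- The face of `P` on which the linear functional `w` attains its minimum. -/
def faceOf [Fintype ι] (P : Set (ι → ℚ)) (w : ι → ℚ) : Set (ι → ℚ) :=
  {x | x ∈ P ∧ ∀ y ∈ P, dotp w x ≤ dotp w y}

/-- `F` is a (nonempty) face of `P`. -/
def IsFaceOf [Fintype ι] (P F : Set (ι → ℚ)) : Prop :=
  F.Nonempty ∧ ∃ w, F = faceOf P w

/-- The (closed) inner normal cone of a face `F` of `P`: all functionals minimized on `F`. -/
def normalCone [Fintype ι] (P F : Set (ι → ℚ)) : Set (ι → ℚ) :=
  {w | F ⊆ faceOf P w}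

/-- The recession cone of `P`. -/
def recCone (P : Set (ι → ℚ)) : Set (ι → ℚ) := {u | ∀ x ∈ P, x + u ∈ P}

/-- The dual cone of `C`. -/
def dualCone [Fintype ι] (C : Set (ι → ℚ)) : Set (ι → ℚ) := {w | ∀ x ∈ C, 0 ≤ dotp w x}

/-- The relative interior of a convex set `S`. -/
def relint (S : Set (ι → ℚ)) : Set (ι → ℚ) :=
  {x | x ∈ S ∧ ∀ y ∈ S, ∃ ε : ℚ, 0 < ε ∧ x + ε • (x - y) ∈ S}

/-- `P` is a polyhedron `{x | A x ≥ b}`. -/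
def IsPolyhedron [Fintype ι] (P : Set (ι → ℚ)) : Prop :=
  ∃ (r : ℕ) (A : Fin r → ι → ℚ) (b : Fin r → ℚ), P = {x | ∀ i, b i ≤ dotp (A i) x}

/-- `C` is a polyhedral cone `{x | A x ≥ 0}`. -/
def IsPolyhedralCone [Fintype ι] (C : Set (ι → ℚ)) : Prop :=
  ∃ (r : ℕ) (A : Fin r → ι → ℚ), C = {x | ∀ i, 0 ≤ dotp (A i) x}

/-- Two polyhedra are normally equivalent: they have the same inner normal fan,
i.e. the same support and the same partition of functionals by faces. -/
def normallyEquiv [Fintype ι] (P P' : Set (ι → ℚ)) : Prop :=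
  (∀ w, (faceOf P w).Nonempty ↔ (faceOf P' w).Nonempty) ∧
  ∀ w w', faceOf P w = faceOf P w' ↔ faceOf P' w = faceOf P' w'

/-- `F` is the smallest face of `P` containing the set `S`. -/
def IsSmallestFaceContaining [Fintype ι] (P S F : Set (ι → ℚ)) : Prop :=
  IsFaceOf P F ∧ S ⊆ F ∧ ∀ G, IsFaceOf P G → S ⊆ G → F ⊆ G

/-- The homogenization `P̃` of `P`: the closure in `(ι ⊕ Unit) → ℚ` of the cone over `P`
placed at height `1`. -/
def tildeSet (P : Set (ι → ℚ)) : Set ((ι ⊕ Unit) → ℚ) :=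
  closure {p | ∃ x ∈ P, ∃ l : ℚ, 0 < l ∧ p = Sum.elim (l • x) (fun _ => l)}

/-!
Both cells containing `w` are cut out by the same condition on `w'`: for every `y ∈ C`, if `w`
lies in the projection `π^∨(F_y)` of the face `F_y` of `C^∨` minimized by `y`, then so does `w'`.
For the refinement this holds because the faces of `C^∨` are exactly the `F_y` with `y ∈ C`
(polyhedral cones are closed). For the fiber fan it is strong LP duality (Farkas' lemma): `x`
minimizes `w` on the fiber `C_v` iff `(x, v) ∈ C` and some `u ∈ C^∨` with `π^∨ u = w` vanishes at
`(x, v)`, i.e. `w ∈ π^∨(F_(x,v))`.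
-/

section DotProduct

variable [Fintype ι] {R : Type*} [CommRing R]

lemma sumElim_const_dotProduct (p : ι → R) (q : R) (z : ι ⊕ Unit → R) :
    Sum.elim p (fun _ => q) ⬝ᵥ z = p ⬝ᵥ (z ∘ Sum.inl) + q * z (Sum.inr ()) := by
  simp [dotProduct, Fintype.sum_sum_type]

lemma dotProduct_sumElim {κ : Type*} [Fintype κ] (u : ι ⊕ κ → R) (x : ι → R)
    (v : κ → R) : u ⬝ᵥ Sum.elim x v = u ∘ Sum.inl ⬝ᵥ x + u ∘ Sum.inr ⬝ᵥ v := by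
  conv_lhs => rw [← Sum.elim_comp_inl_inr u]
  exact sumElim_dotProduct_sumElim _ _ _ _

/-- The elimination step of Farkas' lemma: substitute `x + (a ⬝ᵥ x) • y` for `x`. -/
lemma dotProduct_nonneg_of_eliminate [Preorder R] {n : ℕ} {a w y : ι → R} {A : Fin n → ι → R}
    (h : ∀ x, 0 ≤ a ⬝ᵥ x → (∀ i, 0 ≤ A i ⬝ᵥ x) → 0 ≤ w ⬝ᵥ x) (hay : a ⬝ᵥ y = -1) (x : ι → R)
    (hx : ∀ i, 0 ≤ (A i + (A i ⬝ᵥ y) • a) ⬝ᵥ x) : 0 ≤ (w + (w ⬝ᵥ y) • a) ⬝ᵥ x := by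
  have subst : ∀ b : ι → R, b ⬝ᵥ (x + (a ⬝ᵥ x) • y) = (b + (b ⬝ᵥ y) • a) ⬝ᵥ x := by
    intro b
    simp only [dotProduct_add, add_dotProduct, dotProduct_smul, smul_dotProduct, smul_eq_mul,
      dotProduct_comm a x]
    ring
  have hz := h (x + (a ⬝ᵥ x) • y) (by rw [subst, hay]; simp) fun i => (subst (A i)).symm ▸ hx i
  rwa [subst] at hz

end DotProduct

section Farkas

variable [Fintype ι] {𝕜 : Type*} [Field 𝕜] [LinearOrder 𝕜] [IsStrictOrderedRing 𝕜]

lemma eq_zero_of_forall_dotProduct_nonneg {w : ι → 𝕜} (h : ∀ x, 0 ≤ w ⬝ᵥ x) : w = 0 := by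
  have hle : w ⬝ᵥ w ≤ 0 := by simpa [dotProduct_neg] using h (-w)
  exact dotProduct_self_eq_zero.mp
    (le_antisymm hle (Finset.sum_nonneg fun i _ => mul_self_nonneg (w i)))

lemma exists_dotProduct_eq_neg_one {n : ℕ} {a w y₀ : ι → 𝕜} {A : Fin n → ι → 𝕜}
    (hay₀ : a ⬝ᵥ y₀ < 0) (hy₀ : ∀ i, 0 ≤ A i ⬝ᵥ y₀) (hwy₀ : w ⬝ᵥ y₀ < 0) :
    ∃ y, a ⬝ᵥ y = -1 ∧ (∀ i, 0 ≤ A i ⬝ᵥ y) ∧ w ⬝ᵥ y < 0 := by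
  have hs : 0 < (-(a ⬝ᵥ y₀))⁻¹ := by simpa using hay₀
  refine ⟨(-(a ⬝ᵥ y₀))⁻¹ • y₀, ?_, fun i => ?_, ?_⟩
  · rw [dotProduct_smul, smul_eq_mul, inv_mul_eq_iff_eq_mul₀ (by linarith)]
    ring
  · simpa [dotProduct_smul] using mul_nonneg hs.le (hy₀ i)
  · simpa [dotProduct_smul] using mul_neg_of_pos_of_neg hs hwy₀

theorem farkas : ∀ {n : ℕ} (A : Fin n → ι → 𝕜) (w : ι → 𝕜),
    (∀ x, (∀ i, 0 ≤ A i ⬝ᵥ x) → 0 ≤ w ⬝ᵥ x) → ∃ l : Fin n → 𝕜, 0 ≤ l ∧ w = ∑ i, l i • A i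
  | 0, A, w, h =>
    ⟨0, le_rfl, by simpa using eq_zero_of_forall_dotProduct_nonneg fun x => h x finZeroElim⟩
  | n + 1, A, w, h => by
    set a := A 0
    set A' : Fin n → ι → 𝕜 := Fin.tail A
    simp only [Fin.forall_fin_succ] at h
    suffices ∃ c : 𝕜, 0 ≤ c ∧ ∃ l : Fin n → 𝕜, 0 ≤ l ∧ w = c • a + ∑ i, l i • A' i by
      obtain ⟨c, hc, l, hl, rfl⟩ := this
      refine ⟨Fin.cons c l, fun i => Fin.cases hc hl i, ?_⟩
      simp [Fin.sum_univ_succ, a, A', Fin.tail]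
    by_cases hA' : ∀ x, (∀ i, 0 ≤ A' i ⬝ᵥ x) → 0 ≤ w ⬝ᵥ x
    · obtain ⟨l, hl, hw⟩ := farkas A' w hA'
      exact ⟨0, le_rfl, l, hl, by simpa using hw⟩
    push Not at hA'
    obtain ⟨y₀, hy₀, hwy₀⟩ := hA'
    have hay₀ : a ⬝ᵥ y₀ < 0 := by
      by_contra! hay₀
      exact (h y₀ ⟨hay₀, hy₀⟩).not_gt hwy₀
    obtain ⟨y, hay, hy, hwy⟩ := exists_dotProduct_eq_neg_one hay₀ hy₀ hwy₀
    obtain ⟨l, hl, hw⟩ := farkas (fun i => A' i + (A' i ⬝ᵥ y) • a) (w + (w ⬝ᵥ y) • a)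
      (dotProduct_nonneg_of_eliminate (fun x hax hx => h x ⟨hax, hx⟩) hay)
    refine ⟨∑ i, l i * (A' i ⬝ᵥ y) - w ⬝ᵥ y, ?_, l, hl, ?_⟩
    · have := Finset.sum_nonneg fun i (_ : i ∈ Finset.univ) => mul_nonneg (hl i) (hy i)
      linarith
    · calc w = ∑ i, l i • (A' i + (A' i ⬝ᵥ y) • a) - (w ⬝ᵥ y) • a := eq_sub_of_add_eq hw
        _ = _ := by
          simp only [smul_add, Finset.sum_add_distrib, smul_smul, sub_smul, Finset.sum_smul]
          abel

lemma nonneg_of_forall_le_add_mul {a b γ : 𝕜} (h : ∀ s, 0 ≤ s → γ ≤ a + s * b) : 0 ≤ b := by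
  by_contra! hb
  have hs : (a - γ + 1) / -b * b = -(a - γ + 1) := by field_simp [hb.ne]
  have := h ((a - γ + 1) / -b) (div_nonneg (by linarith [h 0 le_rfl]) (by linarith))
  linarith

/-- At height `t > 0` by rescaling; at height `0` because a recession direction of a nonempty
polyhedron cannot decrease a functional that is bounded below on it. -/
lemma homogenized_le_dotProduct {n : ℕ} {B : Fin n → ι → 𝕜} {c : Fin n → 𝕜} {w : ι → 𝕜} {γ : 𝕜}
    {x₀ : ι → 𝕜} (hx₀ : ∀ i, c i ≤ B i ⬝ᵥ x₀) (h : ∀ x, (∀ i, c i ≤ B i ⬝ᵥ x) → γ ≤ w ⬝ᵥ x)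
    {x : ι → 𝕜} {t : 𝕜} (ht : 0 ≤ t) (hx : ∀ i, c i * t ≤ B i ⬝ᵥ x) : γ * t ≤ w ⬝ᵥ x := by
  rcases ht.eq_or_lt with rfl | ht
  · simp only [mul_zero] at hx ⊢
    refine nonneg_of_forall_le_add_mul (a := w ⬝ᵥ x₀) (γ := γ) fun s hs => ?_
    have hfeas : ∀ i, c i ≤ B i ⬝ᵥ (x₀ + s • x) := fun i => by
      simpa [dotProduct_add, dotProduct_smul] using add_le_add (hx₀ i) (mul_nonneg hs (hx i))
    simpa [dotProduct_add, dotProduct_smul] using h _ hfeas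
  · have hγ := h (t⁻¹ • x) fun i => by
      rw [dotProduct_smul, smul_eq_mul, le_inv_mul_iff₀ ht, mul_comm]
      exact hx i
    rwa [dotProduct_smul, smul_eq_mul, le_inv_mul_iff₀ ht, mul_comm] at hγ

theorem farkas_affine {n : ℕ} (B : Fin n → ι → 𝕜) (c : Fin n → 𝕜) (w : ι → 𝕜) (γ : 𝕜)
    {x₀ : ι → 𝕜} (hx₀ : ∀ i, c i ≤ B i ⬝ᵥ x₀) (h : ∀ x, (∀ i, c i ≤ B i ⬝ᵥ x) → γ ≤ w ⬝ᵥ x) :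
    ∃ l : Fin n → 𝕜, 0 ≤ l ∧ w = ∑ i, l i • B i ∧ γ ≤ ∑ i, l i * c i := by
  obtain ⟨l, hl, hw⟩ := farkas
    (Fin.cons (Sum.elim 0 fun _ : Unit => 1) fun i => Sum.elim (B i) fun _ => -c i)
    (Sum.elim w fun _ => -γ) fun z hz => by
      simp only [Fin.forall_fin_succ, Fin.cons_zero, Fin.cons_succ, sumElim_const_dotProduct,
        zero_dotProduct, zero_add, one_mul] at hz ⊢
      have := homogenized_le_dotProduct hx₀ h hz.1 fun i => by linarith [hz.2 i]
      linarith
  refine ⟨Fin.tail l, fun i => hl i.succ, ?_, ?_⟩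
  · funext j
    simpa [Fin.sum_univ_succ, Finset.sum_apply, Fin.tail] using congrFun hw (Sum.inl j)
  · have := congrFun hw (Sum.inr ())
    simp only [Sum.elim_inr, Finset.sum_apply, Pi.smul_apply, smul_eq_mul, Fin.sum_univ_succ,
      Fin.cons_zero, mul_one, Fin.cons_succ, mul_neg, sum_neg_distrib] at this
    simp only [Fin.tail]
    linarith [show 0 ≤ l 0 from hl 0]

end Farkas

section FiberFan

variable [Fintype ι]

lemma dotp_eq_dotProduct (w x : ι → ℚ) : dotp w x = w ⬝ᵥ x := rfl

lemma dotp_comm (w x : ι → ℚ) : dotp w x = dotp x w := dotProduct_comm w x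

lemma mem_faceOf_dualCone_iff {C : Set (ι → ℚ)} {y u : ι → ℚ} (hy : y ∈ C) :
    u ∈ faceOf (dualCone C) y ↔ u ∈ dualCone C ∧ dotp u y = 0 := by
  have h0 : (0 : ι → ℚ) ∈ dualCone C := fun x _ => by simp [dotp_eq_dotProduct]
  refine ⟨fun hu => ⟨hu.1, le_antisymm ?_ (hu.1 y hy)⟩, fun hu => ⟨hu.1, fun u' hu' => ?_⟩⟩
  · simpa [dotp_comm y, dotp_eq_dotProduct] using hu.2 0 h0
  · rw [dotp_comm y, hu.2, dotp_comm]
    exact hu' y hy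

/-- Closedness of polyhedral cones: each defining constraint `A i` lies in the dual cone. -/
lemma mem_of_faceOf_dualCone_nonempty {C : Set (ι → ℚ)} (hC : IsPolyhedralCone C) {y : ι → ℚ}
    (hy : (faceOf (dualCone C) y).Nonempty) : y ∈ C := by
  obtain ⟨r, A, rfl⟩ := hC
  obtain ⟨u, hu, hmin⟩ := hy
  intro i
  have hsum : u + A i ∈ dualCone {x | ∀ i, 0 ≤ dotp (A i) x} := fun x hx => by
    rw [dotp_eq_dotProduct, add_dotProduct]
    exact add_nonneg (hu x hx) (hx i)
  have := hmin _ hsum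
  rw [dotp_eq_dotProduct, dotp_eq_dotProduct, dotProduct_add] at this
  rw [dotp_comm, dotp_eq_dotProduct]
  linarith

lemma isFaceOf_dualCone_iff {C : Set (ι → ℚ)} (hC : IsPolyhedralCone C) {G : Set (ι → ℚ)} :
    IsFaceOf (dualCone C) G ↔ ∃ y ∈ C, G = faceOf (dualCone C) y := by
  constructor
  · rintro ⟨hG, y, rfl⟩
    exact ⟨y, mem_of_faceOf_dualCone_nonempty hC hG, rfl⟩
  · rintro ⟨y, hy, rfl⟩
    exact ⟨⟨0, (mem_faceOf_dualCone_iff hy).2 ⟨fun x _ => by simp [dotp_eq_dotProduct],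
      by simp [dotp_eq_dotProduct]⟩⟩, y, rfl⟩

variable {κ : Type*} [Fintype κ]

theorem exists_dual_certificate_of_mem_faceOf_fiber {C : Set (ι ⊕ κ → ℚ)}
    (hC : IsPolyhedralCone C) {v : κ → ℚ} {w x : ι → ℚ}
    (hx : x ∈ faceOf {x' | Sum.elim x' v ∈ C} w) :
    ∃ u ∈ dualCone C, u ∘ Sum.inl = w ∧ dotp u (Sum.elim x v) = 0 := by
  obtain ⟨r, A, rfl⟩ := hC
  have hfib : ∀ x', Sum.elim x' v ∈ {x | ∀ i, 0 ≤ dotp (A i) x} ↔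
      ∀ i, -(A i ∘ Sum.inr ⬝ᵥ v) ≤ A i ∘ Sum.inl ⬝ᵥ x' := fun x' =>
    forall_congr' fun i => by rw [dotp_eq_dotProduct, dotProduct_sumElim, neg_le_iff_add_nonneg]
  obtain ⟨l, hl, hw, hγ⟩ := farkas_affine _ _ w (w ⬝ᵥ x) ((hfib x).1 hx.1)
    fun x' hx' => hx.2 x' ((hfib x').2 hx')
  set u := ∑ i, l i • A i
  have hu : u ∈ dualCone {x | ∀ i, 0 ≤ dotp (A i) x} := fun y hy => by
    simp only [u, dotp_eq_dotProduct, sum_dotProduct, smul_dotProduct, smul_eq_mul]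
    exact Finset.sum_nonneg fun i _ => mul_nonneg (hl i) (hy i)
  have huw : u ∘ Sum.inl = w := by
    rw [hw]; funext j; simp [u, Finset.sum_apply]
  have hur : u ∘ Sum.inr = ∑ i, l i • (A i ∘ Sum.inr) := by
    funext j; simp [u, Finset.sum_apply]
  refine ⟨u, hu, huw, le_antisymm ?_ (hu _ hx.1)⟩
  simp only [mul_neg, Finset.sum_neg_distrib] at hγ
  rw [dotp_eq_dotProduct, dotProduct_sumElim, huw, hur, sum_dotProduct]
  simp only [smul_dotProduct, smul_eq_mul]
  linarith

lemma mem_faceOf_fiber_of_dual_certificate {C : Set (ι ⊕ κ → ℚ)} {v : κ → ℚ} {w x : ι → ℚ}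
    (hx : Sum.elim x v ∈ C) {u : ι ⊕ κ → ℚ} (hu : u ∈ dualCone C) (huw : u ∘ Sum.inl = w)
    (hux : dotp u (Sum.elim x v) = 0) : x ∈ faceOf {x' | Sum.elim x' v ∈ C} w := by
  refine ⟨hx, fun x' hx' => ?_⟩
  have hux' := hu _ hx'
  rw [dotp_eq_dotProduct, dotProduct_sumElim, huw] at hux hux'
  exact (by linarith : w ⬝ᵥ x ≤ w ⬝ᵥ x')

theorem mem_faceOf_fiber_iff {C : Set (ι ⊕ κ → ℚ)} (hC : IsPolyhedralCone C) {v : κ → ℚ}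
    {w x : ι → ℚ} :
    x ∈ faceOf {x' | Sum.elim x' v ∈ C} w ↔
      Sum.elim x v ∈ C ∧ w ∈ (fun u => u ∘ Sum.inl) '' faceOf (dualCone C) (Sum.elim x v) := by
  constructor
  · intro hx
    have hxC : Sum.elim x v ∈ C := hx.1
    obtain ⟨u, hu, huw, hux⟩ := exists_dual_certificate_of_mem_faceOf_fiber hC hx
    exact ⟨hxC, u, (mem_faceOf_dualCone_iff hxC).2 ⟨hu, hux⟩, huw⟩
  · rintro ⟨hx, u, hu, huw⟩
    rw [mem_faceOf_dualCone_iff hx] at hu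
    exact mem_faceOf_fiber_of_dual_certificate hx hu.1 huw hu.2

lemma mem_iInter_normalCone_fiber_iff {C : Set (ι ⊕ κ → ℚ)} (hC : IsPolyhedralCone C)
    {w w' : ι → ℚ} :
    w' ∈ ⋂ v ∈ (fun x => x ∘ Sum.inr) '' C,
        normalCone {x' | Sum.elim x' v ∈ C} (faceOf {x' | Sum.elim x' v ∈ C} w) ↔
      ∀ y ∈ C, w ∈ (fun u => u ∘ Sum.inl) '' faceOf (dualCone C) y →
        w' ∈ (fun u => u ∘ Sum.inl) '' faceOf (dualCone C) y := by
  simp only [mem_iInter, normalCone, Set.subset_def, Set.forall_mem_image, mem_faceOf_fiber_iff hC]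
  constructor
  · intro h y hy hw
    rw [← Sum.elim_comp_inl_inr y] at hy hw ⊢
    exact (h hy _ ⟨hy, hw⟩).2
  · intro h y _ x hx
    exact ⟨hx.1, h _ hx.1 hx.2⟩

lemma mem_sInter_projected_faces_iff {C : Set (ι ⊕ κ → ℚ)} (hC : IsPolyhedralCone C)
    {w w' : ι → ℚ} :
    w' ∈ ⋂₀ {S | ∃ G, IsFaceOf (dualCone C) G ∧ S = (fun u => u ∘ Sum.inl) '' G ∧ w ∈ S} ↔
      ∀ y ∈ C, w ∈ (fun u => u ∘ Sum.inl) '' faceOf (dualCone C) y →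
        w' ∈ (fun u => u ∘ Sum.inl) '' faceOf (dualCone C) y := by
  simp only [mem_sInter, isFaceOf_dualCone_iff hC]
  constructor
  · intro h y hy hw
    exact h _ ⟨_, ⟨y, hy, rfl⟩, rfl, hw⟩
  · rintro h _ ⟨_, ⟨y, hy, rfl⟩, rfl, hw⟩
    exact h y hy hw

end FiberFan

/-- The equality of the two fans, stated cell by cell: for each `w`, the smallest cells
containing `w` agree. -/
theorem fiber_fan_eq_refinement_of_projected_faces_general (m d : ℕ)
    (C : Set ((Fin m ⊕ Fin d) → ℚ))
    (hC : IsPolyhedralCone C)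
    (w : Fin m → ℚ) :
    (⋂ v ∈ (fun x : (Fin m ⊕ Fin d) → ℚ => x ∘ Sum.inr) '' C,
        normalCone {x' : Fin m → ℚ | Sum.elim x' v ∈ C}
          (faceOf {x' : Fin m → ℚ | Sum.elim x' v ∈ C} w))
      = ⋂₀ {S : Set (Fin m → ℚ) | ∃ G, IsFaceOf (dualCone C) G ∧
            S = (fun u : (Fin m ⊕ Fin d) → ℚ => u ∘ Sum.inl) '' G ∧ w ∈ S} := by
  ext w'
  rw [mem_iInter_normalCone_fiber_iff hC, mem_sInter_projected_faces_iff hC]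

/-- the fiber fan `N(C, π(C))` equals the common refinement of the cones
`π^∨(F)` for faces `F` of `C^∨`; expressed via equality, at each `w` in the common
support, of the minimal cell containing `w`. -/
theorem fiber_fan_eq_refinement_of_projected_faces (m d : ℕ)
    (C : Set ((Fin m ⊕ Fin d) → ℚ))
    (hC : IsPolyhedralCone C) (hfull : Submodule.span ℚ C = ⊤)
    (w : Fin m → ℚ)
    (hw : w ∈ (fun u : (Fin m ⊕ Fin d) → ℚ => u ∘ Sum.inl) '' dualCone C) :
    (⋂ v ∈ (fun x : (Fin m ⊕ Fin d) → ℚ => x ∘ Sum.inr) '' C,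
        normalCone {x' : Fin m → ℚ | Sum.elim x' v ∈ C}
          (faceOf {x' : Fin m → ℚ | Sum.elim x' v ∈ C} w))
      = ⋂₀ {S : Set (Fin m → ℚ) | ∃ G, IsFaceOf (dualCone C) G ∧
            S = (fun u : (Fin m ⊕ Fin d) → ℚ => u ∘ Sum.inl) '' G ∧ w ∈ S} :=
  fiber_fan_eq_refinement_of_projected_faces_general m d C hC w
end
end

section
/- Let P ⊆ ℚ^n be a nonempty polyhedron, π : ℚ^n → ℚ^d a linear projection with Q = π(P), and let π̃ : ℚ^n ⊕ ℚ → ℚ^d ⊕ ℚ send (x, λ) to (π(x), λ). Then π̃(P̃) = Q̃, where P̃ and Q̃ denote the closures of the cones {(λx, λ) : x ∈ P, λ > 0} and {(λq, λ) : q ∈ Q, λ > 0} respectively. In particular π(rec(P)) = rec(Q). -/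
open Finset Set Pointwise

noncomputable section

variable {ι : Type*}

section AuxLemmas

lemma dotp_add_right [Fintype ι] (w x y : ι → ℚ) : dotp w (x + y) = dotp w x + dotp w y := by
  simp [dotp, mul_add, Finset.sum_add_distrib]

lemma dotp_smul_right [Fintype ι] (w x : ι → ℚ) (c : ℚ) : dotp w (c • x) = c * dotp w x := by
  simp [dotp, Finset.mul_sum]; apply Finset.sum_congr rfl; intros; ring

lemma dotp_smul_left [Fintype ι] (w x : ι → ℚ) (c : ℚ) : dotp (c • w) x = c * dotp w x := by
  simp [dotp, Finset.mul_sum]; apply Finset.sum_congr rfl; intros; ring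

lemma dotp_sub_left [Fintype ι] (w w' x : ι → ℚ) : dotp (w - w') x = dotp w x - dotp w' x := by
  simp [dotp, sub_mul, Finset.sum_sub_distrib]

lemma dotp_zero_left [Fintype ι] (x : ι → ℚ) : dotp 0 x = 0 := by simp [dotp]

lemma dotp_split {α β : Type*} [Fintype α] [Fintype β] (w x : (α ⊕ β) → ℚ) :
    dotp w x = dotp (w ∘ Sum.inl) (x ∘ Sum.inl) + dotp (w ∘ Sum.inr) (x ∘ Sum.inr) := by
  simp [dotp, Fintype.sum_sum_type, Function.comp]

lemma dotp_unit (w x : Unit → ℚ) : dotp w x = w () * x () := by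
  simp [dotp]

lemma dotp_comp_equiv {ι κ : Type*} [Fintype ι] [Fintype κ] (e : κ ≃ ι) (w x : ι → ℚ) :
    dotp (w ∘ e) (x ∘ e) = dotp w x :=
  Fintype.sum_equiv e _ _ fun _ => rfl

lemma dotp_single [Fintype ι] [DecidableEq ι] (j : ι) (u : ι → ℚ) :
    dotp (Pi.single j 1) u = u j := by
  simp [dotp, Pi.single_apply, ite_mul]

lemma dotp_continuous [Fintype ι] (w : ι → ℚ) : Continuous fun x : ι → ℚ => dotp w x := by
  unfold dotp
  exact continuous_finset_sum _ fun j _ => continuous_const.mul (continuous_apply j)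

lemma polyCone_closed [Fintype ι] {C : Set (ι → ℚ)} (h : IsPolyhedralCone C) : IsClosed C := by
  obtain ⟨r, A, rfl⟩ := h
  have : {x : ι → ℚ | ∀ i, 0 ≤ dotp (A i) x} = ⋂ i, {x | 0 ≤ dotp (A i) x} := by
    ext x; simp
  rw [this]
  exact isClosed_iInter fun i => isClosed_le continuous_const (dotp_continuous _)

lemma polyCone_of_fintype [Fintype ι] {κ : Type*} [Fintype κ] (A : κ → ι → ℚ) :
    IsPolyhedralCone {x : ι → ℚ | ∀ i, 0 ≤ dotp (A i) x} := by
  refine ⟨Fintype.card κ, A ∘ (Fintype.equivFin κ).symm, ?_⟩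
  ext x
  constructor
  · intro h i; exact h _
  · intro h i; simpa using h ((Fintype.equivFin κ) i)

lemma polyCone_reindex {ι κ : Type*} [Fintype ι] [Fintype κ] (e : κ ≃ ι) {C : Set (ι → ℚ)}
    (h : IsPolyhedralCone C) : IsPolyhedralCone ((fun x => x ∘ e) '' C) := by
  obtain ⟨r, A, rfl⟩ := h
  have himg : (fun x : ι → ℚ => x ∘ e) '' {x | ∀ i, 0 ≤ dotp (A i) x}
      = {y : κ → ℚ | ∀ i, 0 ≤ dotp (A i ∘ e) y} := by
    ext y
    constructor
    · rintro ⟨x, hx, rfl⟩ i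
      rw [dotp_comp_equiv]; exact hx i
    · intro hy
      refine ⟨y ∘ e.symm, fun i => ?_, by funext k; simp⟩
      have h2 : (y ∘ e.symm) ∘ e = y := by funext k; simp
      have := hy i
      rwa [← h2, dotp_comp_equiv] at this
  rw [himg]
  exact ⟨r, fun i => A i ∘ e, rfl⟩

lemma fm_unit {ι : Type*} [Fintype ι] {r : ℕ} (A : Fin r → (ι ⊕ Unit) → ℚ) :
    (fun x : (ι ⊕ Unit) → ℚ => x ∘ Sum.inl) '' {x | ∀ i, 0 ≤ dotp (A i) x}
    = {y : ι → ℚ | (∀ i, A i (Sum.inr ()) = 0 → 0 ≤ dotp (A i ∘ Sum.inl) y) ∧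
        ∀ i j, 0 < A i (Sum.inr ()) → A j (Sum.inr ()) < 0 →
          0 ≤ dotp (A i (Sum.inr ()) • (A j ∘ Sum.inl)
                - A j (Sum.inr ()) • (A i ∘ Sum.inl)) y} := by
  classical
  set a : Fin r → ℚ := fun i => A i (Sum.inr ()) with ha
  have key : ∀ (x : (ι ⊕ Unit) → ℚ) i, dotp (A i) x
      = dotp (A i ∘ Sum.inl) (x ∘ Sum.inl) + a i * x (Sum.inr ()) := by
    intro x i
    rw [dotp_split, dotp_unit]; rfl
  ext y
  constructor
  · rintro ⟨x, hx, rfl⟩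
    constructor
    · intro i h0
      have := hx i
      rw [key x i, show a i = 0 from h0, zero_mul, add_zero] at this
      exact this
    · intro i j hi hj
      have h1 := hx i
      have h2 := hx j
      rw [key] at h1 h2
      rw [dotp_sub_left, dotp_smul_left, dotp_smul_left]
      show (0:ℚ) ≤ a i * dotp (A j ∘ Sum.inl) (x ∘ Sum.inl) - a j * dotp (A i ∘ Sum.inl) (x ∘ Sum.inl)
      nlinarith [mul_le_mul_of_nonneg_left h2 hi.le,
        mul_le_mul_of_nonneg_left h1 (neg_nonneg.mpr hj.le)]
  · rintro ⟨h0, hpair⟩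
    set dd : Fin r → ℚ := fun i => dotp (A i ∘ Sum.inl) y with hdd
    set lb : Fin r → ℚ := fun i => -dd i / a i with hlb
    set L : Finset (Fin r) := Finset.univ.filter (fun i => 0 < a i) with hL
    set U : Finset (Fin r) := Finset.univ.filter (fun i => a i < 0) with hU
    have hpair' : ∀ i j, 0 < a i → a j < 0 → 0 ≤ a i * dd j - a j * dd i := by
      intro i j hi hj
      have hp := hpair i j hi hj
      rw [dotp_sub_left, dotp_smul_left, dotp_smul_left] at hp
      exact hp
    set t : ℚ := if hl : L.Nonempty then L.sup' hl lb
      else if hu : U.Nonempty then U.inf' hu lb else 0 with hT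
    have heq : ∀ k, a k ≠ 0 → a k * lb k = -dd k := by
      intro k hk
      show a k * (-dd k / a k) = -dd k
      field_simp
    have hcomp : ∀ i ∈ L, ∀ j ∈ U, lb i ≤ lb j := by
      intro i hi j hj
      rw [hL, Finset.mem_filter] at hi
      rw [hU, Finset.mem_filter] at hj
      have hi' := hi.2
      have hj' := hj.2
      have hp := hpair' i j hi' hj'
      by_contra hc
      push_neg at hc
      nlinarith [heq i (ne_of_gt hi'), heq j (ne_of_lt hj'),
        mul_neg_of_neg_of_pos hj' (mul_pos hi' (sub_pos.mpr hc))]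
    refine ⟨Sum.elim y (fun _ => t), ?_, by funext k; rfl⟩
    intro i
    rw [key]
    have hyl : (Sum.elim y (fun _ => t) : (ι ⊕ Unit) → ℚ) ∘ Sum.inl = y := rfl
    have hyr : (Sum.elim y (fun _ => t) : (ι ⊕ Unit) → ℚ) (Sum.inr ()) = t := rfl
    rw [hyl, hyr]
    rcases lt_trichotomy (a i) 0 with hneg | hzero | hpos
    · have hiU : i ∈ U := by rw [hU, Finset.mem_filter]; exact ⟨Finset.mem_univ _, hneg⟩
      have ht : t ≤ lb i := by
        rw [hT]
        split_ifs with hl hu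
        · exact Finset.sup'_le hl lb fun j hj => hcomp j hj i hiU
        · exact Finset.inf'_le lb hiU
        · exact absurd ⟨i, hiU⟩ hu
      have : a i * t ≥ a i * lb i := mul_le_mul_of_nonpos_left ht hneg.le
      have hlbi : a i * lb i = -dd i := heq i (ne_of_lt hneg)
      show (0:ℚ) ≤ dd i + a i * t
      linarith [hlbi ▸ this]
    · rw [show a i = 0 from hzero, zero_mul, add_zero]
      exact h0 i hzero
    · have hiL : i ∈ L := by rw [hL, Finset.mem_filter]; exact ⟨Finset.mem_univ _, hpos⟩
      have hl : L.Nonempty := ⟨i, hiL⟩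
      have ht : lb i ≤ t := by
        rw [hT]; rw [dif_pos hl]
        exact Finset.le_sup' lb hiL
      have : a i * lb i ≤ a i * t := mul_le_mul_of_nonneg_left ht hpos.le
      have hlbi : a i * lb i = -dd i := heq i (ne_of_gt hpos)
      show (0:ℚ) ≤ dd i + a i * t
      linarith [hlbi ▸ this]

lemma fm_unit_poly {ι : Type*} [Fintype ι] {C : Set ((ι ⊕ Unit) → ℚ)}
    (h : IsPolyhedralCone C) :
    IsPolyhedralCone ((fun x : (ι ⊕ Unit) → ℚ => x ∘ Sum.inl) '' C) := by
  classical
  obtain ⟨r, A, rfl⟩ := h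
  rw [fm_unit]
  have : {y : ι → ℚ | (∀ i, A i (Sum.inr ()) = 0 → 0 ≤ dotp (A i ∘ Sum.inl) y) ∧
        ∀ i j, 0 < A i (Sum.inr ()) → A j (Sum.inr ()) < 0 →
          0 ≤ dotp (A i (Sum.inr ()) • (A j ∘ Sum.inl)
                - A j (Sum.inr ()) • (A i ∘ Sum.inl)) y}
      = {y : ι → ℚ | ∀ k : Fin r ⊕ (Fin r × Fin r), 0 ≤ dotp
          (Sum.elim (fun i => if A i (Sum.inr ()) = 0 then A i ∘ Sum.inl else 0)
            (fun ij => if 0 < A ij.1 (Sum.inr ()) ∧ A ij.2 (Sum.inr ()) < 0 then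
              A ij.1 (Sum.inr ()) • (A ij.2 ∘ Sum.inl)
                - A ij.2 (Sum.inr ()) • (A ij.1 ∘ Sum.inl) else 0) k) y} := by
    ext y
    constructor
    · rintro ⟨h1, h2⟩ k
      rcases k with i | ⟨i, j⟩
      · by_cases hz : A i (Sum.inr ()) = 0
        · simpa [hz] using h1 i hz
        · simp [hz, dotp_zero_left]
      · by_cases hc : 0 < A i (Sum.inr ()) ∧ A j (Sum.inr ()) < 0
        · simpa [hc] using h2 i j hc.1 hc.2
        · simp [hc, dotp_zero_left]
    · intro hk
      constructor
      · intro i hz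
        have := hk (Sum.inl i)
        simpa [hz] using this
      · intro i j hi hj
        have := hk (Sum.inr (i, j))
        simpa [hi, hj] using this
  rw [this]
  exact polyCone_of_fintype _

lemma elim_sum : ∀ (m : ℕ) (σ : Type) [Fintype σ], Fintype.card σ = m →
    ∀ (ι : Type) [Fintype ι] (C : Set ((ι ⊕ σ) → ℚ)), IsPolyhedralCone C →
    IsPolyhedralCone ((fun x : (ι ⊕ σ) → ℚ => x ∘ Sum.inl) '' C) := by
  intro m
  induction m with
  | zero =>
    intro σ _ hc ι _ C h
    have : IsEmpty σ := Fintype.card_eq_zero_iff.mp hc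
    obtain ⟨r, A, rfl⟩ := h
    have himg : (fun x : (ι ⊕ σ) → ℚ => x ∘ Sum.inl) '' {x | ∀ i, 0 ≤ dotp (A i) x}
        = {y : ι → ℚ | ∀ i, 0 ≤ dotp (A i ∘ Sum.inl) y} := by
      have hdot : ∀ (w x : (ι ⊕ σ) → ℚ), dotp w x = dotp (w ∘ Sum.inl) (x ∘ Sum.inl) := by
        intro w x
        rw [dotp, dotp, Fintype.sum_sum_type]
        simp
      ext y
      constructor
      · rintro ⟨x, hx, rfl⟩ i
        rw [← hdot]; exact hx i
      · intro hy
        refine ⟨Sum.elim y (fun s => isEmptyElim s), fun i => ?_, by funext k; rfl⟩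
        rw [hdot]
        exact hy i
    rw [himg]
    exact polyCone_of_fintype _
  | succ k ih =>
    intro σ _ hc ι _ C h
    classical
    let e' : σ ≃ Fin (k + 1) := (Fintype.equivFin σ).trans (finCongr hc)
    let f : (Fin k ⊕ Unit) ≃ Fin (k + 1) :=
      ((finSuccEquiv k).trans (Equiv.optionEquivSumPUnit (Fin k))).symm
    let E : ((ι ⊕ Fin k) ⊕ Unit) ≃ (ι ⊕ σ) :=
      (Equiv.sumAssoc ι (Fin k) Unit).trans
        ((Equiv.refl ι).sumCongr (f.trans e'.symm))
    have hE : ∀ j : ι, E (Sum.inl (Sum.inl j)) = Sum.inl j := by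
      intro j
      rfl
    have h1 : IsPolyhedralCone ((fun x => x ∘ E) '' C) := polyCone_reindex E h
    have h2 := fm_unit_poly h1
    have h3 := ih (Fin k) (Fintype.card_fin k) ι _ h2
    have himg : ((fun x : (ι ⊕ Fin k) → ℚ => x ∘ Sum.inl) ''
          ((fun x : ((ι ⊕ Fin k) ⊕ Unit) → ℚ => x ∘ Sum.inl) '' ((fun x => x ∘ E) '' C)))
        = (fun x : (ι ⊕ σ) → ℚ => x ∘ Sum.inl) '' C := by
      rw [Set.image_image, Set.image_image]
      apply Set.image_congr
      intro x _
      funext j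
      show x (E (Sum.inl (Sum.inl j))) = x (Sum.inl j)
      rw [hE]
    rwa [himg] at h3

lemma linmap_apply {ι κ : Type} [Fintype ι] [DecidableEq ι] [Fintype κ]
    (f : (ι → ℚ) →ₗ[ℚ] (κ → ℚ)) (x : ι → ℚ) (j : κ) :
    f x j = ∑ k, x k * f (Pi.single k 1) j := by
  have hx : x = ∑ k, x k • (Pi.single k 1 : ι → ℚ) := by
    conv_lhs => rw [pi_eq_sum_univ x]
    apply Finset.sum_congr rfl
    intro k _
    congr 1
    funext j
    simp [Pi.single_apply, eq_comm]
  conv_lhs => rw [hx]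
  rw [map_sum]
  simp [Finset.sum_apply]

lemma polyCone_image {ι κ : Type} [Fintype ι] [DecidableEq ι] [Fintype κ] [DecidableEq κ]
    (f : (ι → ℚ) →ₗ[ℚ] (κ → ℚ)) {C : Set (ι → ℚ)}
    (h : IsPolyhedralCone C) : IsPolyhedralCone (⇑f '' C) := by
  classical
  obtain ⟨r, A, rfl⟩ := h
  set D : Set ((κ ⊕ ι) → ℚ) :=
    {z | (∀ i, 0 ≤ dotp (A i) (z ∘ Sum.inr)) ∧ ∀ j, z (Sum.inl j) = f (z ∘ Sum.inr) j} with hD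
  have hDpoly : IsPolyhedralCone D := by
    set row : (Fin r ⊕ (κ ⊕ κ)) → (κ ⊕ ι) → ℚ :=
      Sum.elim (fun i => Sum.elim 0 (A i))
        (Sum.elim
          (fun j => Sum.elim (Pi.single j 1) (fun k => -(f (Pi.single k 1) j)))
          (fun j => -(Sum.elim (Pi.single j 1) (fun k => -(f (Pi.single k 1) j))))) with hrow
    have hrow1 : ∀ (i : Fin r) (z : (κ ⊕ ι) → ℚ),
        dotp (Sum.elim 0 (A i)) z = dotp (A i) (z ∘ Sum.inr) := by
      intro i z
      rw [dotp_split]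
      have h1 : (Sum.elim 0 (A i) : (κ ⊕ ι) → ℚ) ∘ Sum.inl = 0 := rfl
      have h2 : (Sum.elim 0 (A i) : (κ ⊕ ι) → ℚ) ∘ Sum.inr = A i := rfl
      rw [h1, h2, dotp_zero_left, zero_add]
    have hrow2 : ∀ (j : κ) (z : (κ ⊕ ι) → ℚ),
        dotp (Sum.elim (Pi.single j 1) (fun k => -(f (Pi.single k 1) j))) z
          = z (Sum.inl j) - f (z ∘ Sum.inr) j := by
      intro j z
      rw [dotp_split]
      have h1 : (Sum.elim (Pi.single j 1) (fun k => -(f (Pi.single k 1) j))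
          : (κ ⊕ ι) → ℚ) ∘ Sum.inl = Pi.single j 1 := rfl
      rw [h1, dotp_single, linmap_apply]
      have h2 : dotp ((Sum.elim (Pi.single j 1) (fun k => -(f (Pi.single k 1) j))
          : (κ ⊕ ι) → ℚ) ∘ Sum.inr) (z ∘ Sum.inr)
          = - ∑ k, (z ∘ Sum.inr) k * f (Pi.single k 1) j := by
        rw [dotp, ← Finset.sum_neg_distrib]
        apply Finset.sum_congr rfl
        intro k _
        show -(f (Pi.single k 1) j) * z (Sum.inr k) = -(z (Sum.inr k) * f (Pi.single k 1) j)
        ring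
      rw [h2]
      simp only [Function.comp_apply]
      ring
    have : D = {z | ∀ i, 0 ≤ dotp (row i) z} := by
      ext z
      constructor
      · rintro ⟨hz1, hz2⟩ k
        rcases k with i | j | j
        · rw [hrow]
          show 0 ≤ dotp (Sum.elim 0 (A i)) z
          rw [hrow1]; exact hz1 i
        · show 0 ≤ dotp (Sum.elim (Pi.single j 1) (fun k => -(f (Pi.single k 1) j))) z
          rw [hrow2, hz2 j]; simp
        · show 0 ≤ dotp (-(Sum.elim (Pi.single j 1) (fun k => -(f (Pi.single k 1) j)))) z
          have : (-(Sum.elim (Pi.single j 1) (fun k => -(f (Pi.single k 1) j)))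
              : (κ ⊕ ι) → ℚ)
              = 0 - Sum.elim (Pi.single j 1) (fun k => -(f (Pi.single k 1) j)) := by
            simp
          rw [this, dotp_sub_left, dotp_zero_left, hrow2, hz2 j]; simp
      · intro hz
        constructor
        · intro i
          have := hz (Sum.inl i)
          rwa [show row (Sum.inl i) = Sum.elim (0 : κ → ℚ) (A i) from rfl, hrow1] at this
        · intro j
          have hle := hz (Sum.inr (Sum.inl j))
          have hge := hz (Sum.inr (Sum.inr j))
          rw [show row (Sum.inr (Sum.inl j))
              = Sum.elim (Pi.single j 1) (fun k => -(f (Pi.single k 1) j)) from rfl,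
            hrow2] at hle
          rw [show row (Sum.inr (Sum.inr j))
              = -(Sum.elim (Pi.single j 1) (fun k => -(f (Pi.single k 1) j))) from rfl,
            show (-(Sum.elim (Pi.single j 1) (fun k => -(f (Pi.single k 1) j)))
              : (κ ⊕ ι) → ℚ)
              = 0 - Sum.elim (Pi.single j 1) (fun k => -(f (Pi.single k 1) j)) by simp,
            dotp_sub_left, dotp_zero_left, hrow2] at hge
          linarith
    rw [this]
    exact polyCone_of_fintype row
  have himg : ⇑f '' {x | ∀ i, 0 ≤ dotp (A i) x}
      = (fun z : (κ ⊕ ι) → ℚ => z ∘ Sum.inl) '' D := by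
    ext y
    constructor
    · rintro ⟨x, hx, rfl⟩
      refine ⟨Sum.elim (f x) x, ⟨fun i => hx i, fun j => rfl⟩, rfl⟩
    · rintro ⟨z, ⟨hz1, hz2⟩, rfl⟩
      refine ⟨z ∘ Sum.inr, fun i => hz1 i, ?_⟩
      funext j
      exact (hz2 j).symm
  rw [himg]
  exact elim_sum (Fintype.card ι) ι rfl κ D hDpoly

lemma mem_closure_of_ray {κ : Type*} [Fintype κ] {S : Set (κ → ℚ)} {p v : κ → ℚ}
    (h : ∀ k : ℕ, p + (((k : ℚ) + 1)⁻¹) • v ∈ S) : p ∈ closure S := by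
  rw [Metric.mem_closure_iff]
  intro δ hδ
  set M : ℚ := 1 + ∑ i, |v i| with hM
  have hMpos : (0:ℚ) < M := by
    have : (0:ℚ) ≤ ∑ i, |v i| := Finset.sum_nonneg fun i _ => abs_nonneg _
    linarith
  have hvM : ∀ i, |v i| ≤ M := by
    intro i
    have h1 : |v i| ≤ ∑ j, |v j| :=
      Finset.single_le_sum (fun j _ => abs_nonneg (v j)) (Finset.mem_univ i)
    linarith
  obtain ⟨k, hk⟩ := exists_nat_gt ((M : ℝ) / δ)
  refine ⟨p + (((k : ℚ) + 1)⁻¹) • v, h k, ?_⟩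
  have hkpos : (0:ℚ) < ((k : ℚ) + 1)⁻¹ := by positivity
  rw [dist_pi_lt_iff hδ]
  intro i
  have hco : (p + (((k : ℚ) + 1)⁻¹) • v) i - p i = ((k : ℚ) + 1)⁻¹ * v i := by
    simp [mul_comm]
  rw [Rat.dist_eq, abs_sub_comm]
  have : |((p + (((k : ℚ) + 1)⁻¹) • v) i : ℝ) - (p i : ℝ)|
      = |((((k : ℚ) + 1)⁻¹ * v i : ℚ) : ℝ)| := by
    rw [← Rat.cast_sub, hco]
  rw [this]
  rw [← Rat.cast_abs]
  have habs : |((k : ℚ) + 1)⁻¹ * v i| ≤ ((k : ℚ) + 1)⁻¹ * M := by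
    rw [abs_mul, abs_of_pos hkpos]
    exact mul_le_mul_of_nonneg_left (hvM i) hkpos.le
  have hcast : (((((k : ℚ) + 1)⁻¹ * M : ℚ)) : ℝ) < δ := by
    push_cast
    rw [inv_mul_lt_iff₀ (by positivity)]
    have hM' : (0:ℝ) < (M:ℚ) := by exact_mod_cast hMpos
    calc (M:ℝ) = ((M:ℝ)/δ) * δ := by field_simp
    _ < ((k:ℝ)) * δ := by
        apply mul_lt_mul_of_pos_right hk hδ
    _ ≤ ((k:ℝ) + 1) * δ := by nlinarith
  calc ((|((k : ℚ) + 1)⁻¹ * v i| : ℚ) : ℝ) ≤ ((((k : ℚ) + 1)⁻¹ * M : ℚ) : ℝ) := by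
        exact_mod_cast habs
  _ < δ := hcast

lemma rec_eq [Fintype ι] {r : ℕ} (A : Fin r → ι → ℚ) (b : Fin r → ℚ)
    (hne : {x : ι → ℚ | ∀ i, b i ≤ dotp (A i) x}.Nonempty) :
    recCone {x : ι → ℚ | ∀ i, b i ≤ dotp (A i) x} = {u | ∀ i, 0 ≤ dotp (A i) u} := by
  ext u
  constructor
  · intro hu
    obtain ⟨x, hx⟩ := hne
    have hk : ∀ k : ℕ, x + (k : ℚ) • u ∈ {x : ι → ℚ | ∀ i, b i ≤ dotp (A i) x} := by
      intro k
      induction k with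
      | zero => simpa using hx
      | succ k ih =>
        have h2 := hu _ ih
        have heqn : x + ((k + 1 : ℕ) : ℚ) • u = (x + (k : ℚ) • u) + u := by
          push_cast
          rw [add_smul, one_smul]
          abel
        rw [heqn]
        exact h2
    intro i
    by_contra hneg
    push_neg at hneg
    obtain ⟨k, hk2⟩ := exists_nat_gt ((dotp (A i) x - b i) / (-dotp (A i) u))
    have h3 := hk k i
    rw [dotp_add_right, dotp_smul_right] at h3
    have hd : (0:ℚ) < -dotp (A i) u := by linarith
    rw [div_lt_iff₀ hd] at hk2
    linarith
  · intro hu x hx i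
    rw [dotp_add_right]
    have := hx i
    have := hu i
    linarith

lemma dotp_elim [Fintype ι] (w : ι → ℚ) (c : ℚ) (p : (ι ⊕ Unit) → ℚ) :
    dotp (Sum.elim w (fun _ => c)) p = dotp w (p ∘ Sum.inl) + c * p (Sum.inr ()) := by
  rw [dotp_split, dotp_unit]; rfl

lemma homog_poly [Fintype ι] {r : ℕ} (A : Fin r → ι → ℚ) (b : Fin r → ℚ) :
    IsPolyhedralCone {p : (ι ⊕ Unit) → ℚ | 0 ≤ p (Sum.inr ()) ∧
      ∀ i, p (Sum.inr ()) * b i ≤ dotp (A i) (p ∘ Sum.inl)} := by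
  have : {p : (ι ⊕ Unit) → ℚ | 0 ≤ p (Sum.inr ()) ∧
        ∀ i, p (Sum.inr ()) * b i ≤ dotp (A i) (p ∘ Sum.inl)}
      = {p : (ι ⊕ Unit) → ℚ | ∀ k : Fin r ⊕ Unit, 0 ≤ dotp
          (Sum.elim (fun i => Sum.elim (A i) (fun _ => -(b i)))
            (fun _ => Sum.elim 0 (fun _ => 1)) k) p} := by
    ext p
    constructor
    · rintro ⟨h0, hi⟩ k
      rcases k with i | u
      · show 0 ≤ dotp (Sum.elim (A i) (fun _ => -(b i))) p
        rw [dotp_elim]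
        have := hi i
        linarith
      · show 0 ≤ dotp (Sum.elim (0 : ι → ℚ) (fun _ => (1:ℚ))) p
        rw [dotp_elim, dotp_zero_left]
        linarith
    · intro hk
      constructor
      · have := hk (Sum.inr ())
        rw [show (Sum.elim (fun i => Sum.elim (A i) (fun _ => -(b i)))
            (fun _ => Sum.elim 0 (fun _ => 1)) (Sum.inr ()) : (ι ⊕ Unit) → ℚ)
            = Sum.elim (0 : ι → ℚ) (fun _ => (1:ℚ)) from rfl, dotp_elim, dotp_zero_left] at this
        linarith
      · intro i
        have := hk (Sum.inl i)
        rw [show (Sum.elim (fun i => Sum.elim (A i) (fun _ => -(b i)))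
            (fun _ => Sum.elim 0 (fun _ => 1)) (Sum.inl i) : (ι ⊕ Unit) → ℚ)
            = Sum.elim (A i) (fun _ => -(b i)) from rfl, dotp_elim] at this
        linarith
  rw [this]
  exact polyCone_of_fintype _

lemma tilde_eq [Fintype ι] {r : ℕ} (A : Fin r → ι → ℚ) (b : Fin r → ℚ)
    (hne : {x : ι → ℚ | ∀ i, b i ≤ dotp (A i) x}.Nonempty) :
    tildeSet {x : ι → ℚ | ∀ i, b i ≤ dotp (A i) x}
      = {p : (ι ⊕ Unit) → ℚ | 0 ≤ p (Sum.inr ()) ∧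
          ∀ i, p (Sum.inr ()) * b i ≤ dotp (A i) (p ∘ Sum.inl)} := by
  set P : Set (ι → ℚ) := {x | ∀ i, b i ≤ dotp (A i) x} with hPset
  set CP : Set ((ι ⊕ Unit) → ℚ) := {p | 0 ≤ p (Sum.inr ()) ∧
      ∀ i, p (Sum.inr ()) * b i ≤ dotp (A i) (p ∘ Sum.inl)} with hCPset
  set S : Set ((ι ⊕ Unit) → ℚ) :=
    {p | ∃ x ∈ P, ∃ l : ℚ, 0 < l ∧ p = Sum.elim (l • x) (fun _ => l)} with hSset
  have hCl : IsClosed CP := polyCone_closed (homog_poly A b)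
  apply Set.Subset.antisymm
  · apply closure_minimal ?_ hCl
    rintro p ⟨x, hx, l, hl, rfl⟩
    constructor
    · show (0:ℚ) ≤ l
      exact hl.le
    · intro i
      show l * b i ≤ dotp (A i) ((Sum.elim (l • x) (fun _ => l) : (ι ⊕ Unit) → ℚ) ∘ Sum.inl)
      rw [show (Sum.elim (l • x) (fun _ => l) : (ι ⊕ Unit) → ℚ) ∘ Sum.inl = l • x from rfl,
        dotp_smul_right]
      exact mul_le_mul_of_nonneg_left (hx i) hl.le
  · rintro p ⟨h0, hi⟩
    rcases h0.eq_or_lt with hz | hpos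
    · -- height zero: recession direction
      obtain ⟨x0, hx0⟩ := hne
      apply mem_closure_of_ray (v := Sum.elim x0 (fun _ => 1))
      intro k
      have hc : ((k:ℚ) + 1) ≠ 0 := by positivity
      refine ⟨x0 + ((k:ℚ) + 1) • (p ∘ Sum.inl), ?_, ((k:ℚ) + 1)⁻¹, by positivity, ?_⟩
      · intro i
        rw [dotp_add_right, dotp_smul_right]
        have h1 := hx0 i
        have h2 := hi i
        rw [← hz, zero_mul] at h2
        nlinarith
      · funext s
        cases s with
        | inl j =>
          show p (Sum.inl j) + ((k:ℚ) + 1)⁻¹ * x0 j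
              = ((k:ℚ) + 1)⁻¹ * (x0 j + ((k:ℚ) + 1) * p (Sum.inl j))
          field_simp
          ring
        | inr u =>
          show p (Sum.inr u) + ((k:ℚ) + 1)⁻¹ * 1 = ((k:ℚ) + 1)⁻¹
          have : p (Sum.inr u) = 0 := by cases u; exact hz.symm
          rw [this]
          ring
    · apply subset_closure
      set l : ℚ := p (Sum.inr ()) with hl
      refine ⟨l⁻¹ • (p ∘ Sum.inl), ?_, l, hpos, ?_⟩
      · intro i
        rw [dotp_smul_right]
        have h2 := hi i
        have := mul_le_mul_of_nonneg_left h2 (inv_nonneg.mpr hpos.le)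
        rwa [← mul_assoc, inv_mul_cancel₀ (ne_of_gt hpos), one_mul] at this
      · funext s
        cases s with
        | inl j =>
          show p (Sum.inl j) = (l • (l⁻¹ • (p ∘ Sum.inl))) j
          rw [smul_smul, mul_inv_cancel₀ (ne_of_gt hpos), one_smul]
          rfl
        | inr u =>
          show p (Sum.inr u) = l
          cases u
          rfl

lemma rec_iterate [Fintype ι] {Q : Set (ι → ℚ)} {u : ι → ℚ} (hu : u ∈ recCone Q)
    {q : ι → ℚ} (hq : q ∈ Q) (m : ℕ) : q + (m : ℚ) • u ∈ Q := by
  induction m with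
  | zero => simpa using hq
  | succ k ih =>
    have h2 := hu _ ih
    have heqn : q + ((k + 1 : ℕ) : ℚ) • u = (q + (k : ℚ) • u) + u := by
      push_cast
      rw [add_smul, one_smul]
      abel
    rw [heqn]
    exact h2

/-- The lift of `π` to the homogenization space, as a linear map. -/
def tmap {n d : ℕ} (π : (Fin n → ℚ) →ₗ[ℚ] (Fin d → ℚ)) :
    ((Fin n ⊕ Unit) → ℚ) →ₗ[ℚ] ((Fin d ⊕ Unit) → ℚ) where
  toFun p := Sum.elim (π (p ∘ Sum.inl)) (fun _ => p (Sum.inr ()))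
  map_add' p q := by
    funext s
    cases s with
    | inl j =>
      show π ((p + q) ∘ Sum.inl) j = π (p ∘ Sum.inl) j + π (q ∘ Sum.inl) j
      rw [show (p + q) ∘ Sum.inl = p ∘ Sum.inl + q ∘ Sum.inl from rfl, map_add]
      rfl
    | inr u => rfl
  map_smul' c p := by
    funext s
    cases s with
    | inl j =>
      show π ((c • p) ∘ Sum.inl) j = (c • π (p ∘ Sum.inl)) j
      rw [show (c • p) ∘ Sum.inl = c • (p ∘ Sum.inl) from rfl, map_smul]
    | inr u => rfl

end AuxLemmas


/-- `π̃(P̃) = Q̃` where `Q = π(P)`; in particular `π(rec P) = rec Q`. -/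
theorem tilde_image (n d : ℕ) (P : Set (Fin n → ℚ)) (hP : IsPolyhedron P)
    (hne : P.Nonempty) (π : (Fin n → ℚ) →ₗ[ℚ] (Fin d → ℚ)) :
    (fun p : (Fin n ⊕ Unit) → ℚ =>
        Sum.elim (π (p ∘ Sum.inl)) (fun _ : Unit => p (Sum.inr ()))) '' tildeSet P
        = tildeSet ((⇑π) '' P) ∧
      (⇑π) '' recCone P = recCone ((⇑π) '' P) := by
  classical
  obtain ⟨r, A, b, hPdef⟩ := hP
  have hfun : (fun p : (Fin n ⊕ Unit) → ℚ =>
      Sum.elim (π (p ∘ Sum.inl)) (fun _ : Unit => p (Sum.inr ()))) = ⇑(tmap π) := rfl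
  set tm := tmap π with htm
  set CP : Set ((Fin n ⊕ Unit) → ℚ) :=
    {p | 0 ≤ p (Sum.inr ()) ∧ ∀ i, p (Sum.inr ()) * b i ≤ dotp (A i) (p ∘ Sum.inl)} with hCPset
  have hne' : {x : Fin n → ℚ | ∀ i, b i ≤ dotp (A i) x}.Nonempty := hPdef ▸ hne
  have hT : tildeSet P = CP := by rw [hPdef]; exact tilde_eq A b hne'
  have hDpoly : IsPolyhedralCone (⇑tm '' CP) := polyCone_image tm (homog_poly A b)
  have hDclosed : IsClosed (⇑tm '' CP) := polyCone_closed hDpoly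
  set Q : Set (Fin d → ℚ) := ⇑π '' P with hQ
  set SQ : Set ((Fin d ⊕ Unit) → ℚ) :=
    {p | ∃ x ∈ Q, ∃ l : ℚ, 0 < l ∧ p = Sum.elim (l • x) (fun _ => l)} with hSQ
  have htildeQ : tildeSet Q = closure SQ := rfl
  -- SQ is contained in the image of the homogenization cone
  have hKey1 : SQ ⊆ ⇑tm '' CP := by
    rintro p ⟨q, ⟨x, hxP, rfl⟩, l, hl, rfl⟩
    refine ⟨Sum.elim (l • x) (fun _ => l), ⟨?_, ?_⟩, ?_⟩
    · exact hl.le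
    · intro i
      show l * b i ≤ dotp (A i) ((Sum.elim (l • x) (fun _ => l) : (Fin n ⊕ Unit) → ℚ) ∘ Sum.inl)
      rw [show (Sum.elim (l • x) (fun _ => l) : (Fin n ⊕ Unit) → ℚ) ∘ Sum.inl = l • x from rfl,
        dotp_smul_right]
      have hx' : ∀ i, b i ≤ dotp (A i) x := by
        have := hPdef ▸ hxP
        exact this
      exact mul_le_mul_of_nonneg_left (hx' i) hl.le
    · funext s
      cases s with
      | inl j =>
        show π ((Sum.elim (l • x) (fun _ => l) : (Fin n ⊕ Unit) → ℚ) ∘ Sum.inl) j = (l • π x) j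
        rw [show (Sum.elim (l • x) (fun _ => l) : (Fin n ⊕ Unit) → ℚ) ∘ Sum.inl = l • x from rfl,
          map_smul]
      | inr u => rfl
  -- the image of the homogenization cone is contained in the closure of SQ
  have hKey2 : ⇑tm '' CP ⊆ closure SQ := by
    rintro _ ⟨p, ⟨h0, hi⟩, rfl⟩
    rcases h0.eq_or_lt with hz | hpos
    · obtain ⟨x0, hx0⟩ := hne'
      apply mem_closure_of_ray (v := Sum.elim (π x0) (fun _ => 1))
      intro k
      have hc : ((k:ℚ) + 1) ≠ 0 := by positivity
      have hxk : x0 + ((k:ℚ) + 1) • (p ∘ Sum.inl) ∈ P := by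
        rw [hPdef]
        intro i
        rw [dotp_add_right, dotp_smul_right]
        have h1 := hx0 i
        have h2 := hi i
        rw [← hz, zero_mul] at h2
        nlinarith
      refine ⟨π (x0 + ((k:ℚ) + 1) • (p ∘ Sum.inl)), ⟨_, hxk, rfl⟩, ((k:ℚ) + 1)⁻¹,
        by positivity, ?_⟩
      funext s
      cases s with
      | inl j =>
        show π (p ∘ Sum.inl) j + ((k:ℚ) + 1)⁻¹ * π x0 j
            = (((k:ℚ) + 1)⁻¹ • π (x0 + ((k:ℚ) + 1) • (p ∘ Sum.inl))) j
        rw [map_add, map_smul]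
        show π (p ∘ Sum.inl) j + ((k:ℚ) + 1)⁻¹ * π x0 j
            = ((k:ℚ) + 1)⁻¹ * (π x0 j + ((k:ℚ) + 1) * π (p ∘ Sum.inl) j)
        field_simp
        ring
      | inr u =>
        show p (Sum.inr ()) + ((k:ℚ) + 1)⁻¹ * 1 = ((k:ℚ) + 1)⁻¹
        rw [← hz]
        ring
    · apply subset_closure
      set l : ℚ := p (Sum.inr ()) with hl
      have hxP : l⁻¹ • (p ∘ Sum.inl) ∈ P := by
        rw [hPdef]
        intro i
        rw [dotp_smul_right]
        have h2 := hi i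
        have := mul_le_mul_of_nonneg_left h2 (inv_nonneg.mpr hpos.le)
        rwa [← mul_assoc, inv_mul_cancel₀ (ne_of_gt hpos), one_mul] at this
      refine ⟨π (l⁻¹ • (p ∘ Sum.inl)), ⟨_, hxP, rfl⟩, l, hpos, ?_⟩
      funext s
      cases s with
      | inl j =>
        show π (p ∘ Sum.inl) j = (l • π (l⁻¹ • (p ∘ Sum.inl))) j
        rw [map_smul, smul_smul, mul_inv_cancel₀ (ne_of_gt hpos), one_smul]
      | inr u =>
        show p (Sum.inr u) = l
        cases u
        rfl
  have hMain : ⇑tm '' CP = tildeSet Q := by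
    rw [htildeQ]
    exact Set.Subset.antisymm hKey2 (closure_minimal hKey1 hDclosed)
  constructor
  · rw [hfun, hT, hMain]
  · -- recession cones
    have hrecP : recCone P = {u | ∀ i, 0 ≤ dotp (A i) u} := by
      rw [hPdef]
      exact rec_eq A b hne'
    apply Set.Subset.antisymm
    · rintro _ ⟨u, hu, rfl⟩ q ⟨x, hxP, rfl⟩
      exact ⟨x + u, hu x hxP, map_add π x u⟩
    · intro u' hu'
      obtain ⟨x0, hx0P⟩ := hne
      have hq0 : π x0 ∈ Q := ⟨x0, hx0P, rfl⟩
      have hmem : Sum.elim u' (fun _ => (0:ℚ)) ∈ closure SQ := by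
        apply mem_closure_of_ray (v := Sum.elim (π x0) (fun _ => 1))
        intro k
        have hc : ((k:ℚ) + 1) ≠ 0 := by positivity
        have hxq : π x0 + ((k:ℚ) + 1) • u' ∈ Q := by
          have := rec_iterate hu' hq0 (k + 1)
          rwa [show ((k + 1 : ℕ) : ℚ) = (k:ℚ) + 1 by push_cast; ring] at this
        refine ⟨π x0 + ((k:ℚ) + 1) • u', hxq, ((k:ℚ) + 1)⁻¹, by positivity, ?_⟩
        funext s
        cases s with
        | inl j =>
          show u' j + ((k:ℚ) + 1)⁻¹ * π x0 j
              = ((k:ℚ) + 1)⁻¹ * (π x0 j + ((k:ℚ) + 1) * u' j)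
          field_simp
          ring
        | inr u =>
          show (0:ℚ) + ((k:ℚ) + 1)⁻¹ * 1 = ((k:ℚ) + 1)⁻¹
          ring
      rw [← htildeQ, ← hMain] at hmem
      obtain ⟨p, ⟨h0, hi⟩, heq⟩ := hmem
      have hpz : p (Sum.inr ()) = 0 := by
        have := congrFun heq (Sum.inr ())
        exact this
      have hprec : p ∘ Sum.inl ∈ recCone P := by
        rw [hrecP]
        intro i
        have := hi i
        rw [hpz, zero_mul] at this
        exact this
      refine ⟨p ∘ Sum.inl, hprec, ?_⟩
      funext j
      exact congrFun heq (Sum.inl j)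
end
end
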